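/- Let 𝒮 be the inverse limit (solenoid) of the circle map φ(t) = kt mod 1 and ξ its shift homeomorphism. Let (t, x) ↦ f_t(x) be a continuous family of self-maps of a compact metric space X, constituting a weakly hyperbolic family: diam(f_{t₀} ∘ f_{t₋₁} ∘ ⋯ ∘ f_{t₋ₙ}(X)) → 0 uniformly. Then for each 𝐭 ∈ 𝒮 and x ∈ X, the sequence X(𝐭, n, x) := f_𝐭 ∘ f_{ξ⁻¹𝐭} ∘ ⋯ ∘ f_{ξ⁻ⁿ𝐭}(x) converges, and the limit is independent of x. -/
import Mathlib


open Filter Topology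

/-- The solenoid over the circle map `φ(t) = k t (mod 1)`: sequences
`(t₀, t₋₁, t₋₂, …)` of points of the circle with `t₋ⱼ = φ(t₋ⱼ₋₁)`; here index `n`
stands for `t₋ₙ`. -/
def Sol (k : ℕ) : Type := {t : ℕ → AddCircle (1 : ℝ) // ∀ n, t n = (k : ℤ) • t (n + 1)}

/-- Backward composition `f_{t₀} ∘ f_{t₋₁} ∘ ⋯ ∘ f_{t₋ₙ}` along the past of a base point;
note `f_{ξ⁻ʲtt} = f_{t₋ⱼ}`. -/
def bcomp {X : Type*} (f : AddCircle (1 : ℝ) → X → X) (t : ℕ → AddCircle (1 : ℝ)) :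
    ℕ → X → X
  | 0 => f (t 0)
  | n + 1 => bcomp f t n ∘ f (t (n + 1))

lemma bcomp_mem {X : Type*} (f : AddCircle (1 : ℝ) → X → X) (t : ℕ → AddCircle (1 : ℝ))
    {n m : ℕ} (h : n ≤ m) (x : X) : bcomp f t m x ∈ bcomp f t n '' Set.univ := by
  induction h generalizing x with
  | refl => exact ⟨x, Set.mem_univ x, rfl⟩
  | @step m' _ ih => exact ih (f (t (m' + 1)) x)

lemma bcomp_continuous {X : Type*} [TopologicalSpace X]
    (f : AddCircle (1 : ℝ) → X → X)
    (hcont : Continuous fun p : AddCircle (1 : ℝ) × X => f p.1 p.2)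
    (t : ℕ → AddCircle (1 : ℝ)) (n : ℕ) : Continuous (bcomp f t n) := by
  induction n with
  | zero => exact hcont.comp (continuous_const.prodMk continuous_id)
  | succ n ih =>
    exact ih.comp (hcont.comp (continuous_const.prodMk continuous_id))

/-- For a continuous, weakly hyperbolic family of fiber maps over the solenoid, the
pullback sequence `X(tt, n, x) = f_tt ∘ f_{ξ⁻¹tt} ∘ ⋯ ∘ f_{ξ⁻ⁿtt}(x)` converges for every
`tt`, and the limit does not depend on `x`. -/
theorem bcomp_tendsto_of_weakly_hyperbolic {X : Type*} [MetricSpace X] [CompactSpace X]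
    [Nonempty X] {k : ℕ} (f : AddCircle (1 : ℝ) → X → X)
    (hcont : Continuous fun p : AddCircle (1 : ℝ) × X => f p.1 p.2)
    (hwh : ∀ ε > 0, ∃ n₀ : ℕ, ∀ tt : Sol k, ∀ n ≥ n₀,
      Metric.diam (bcomp f tt.1 n '' Set.univ) < ε)
    (tt : Sol k) :
    ∃ L : X, ∀ x : X, Tendsto (fun n => bcomp f tt.1 n x) atTop (𝓝 L) := by
  obtain ⟨x₀⟩ := ‹Nonempty X›
  have hbd : ∀ n, Bornology.IsBounded (bcomp f tt.1 n '' Set.univ) := fun n =>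
    (isCompact_univ.image (bcomp_continuous f hcont tt.1 n)).isBounded
  -- the sequence at x₀ is Cauchy
  have hc : CauchySeq (fun n => bcomp f tt.1 n x₀) := by
    rw [Metric.cauchySeq_iff]
    intro ε hε
    obtain ⟨n₀, hn₀⟩ := hwh ε hε
    refine ⟨n₀, fun m hm m' hm' => ?_⟩
    calc dist (bcomp f tt.1 m x₀) (bcomp f tt.1 m' x₀)
        ≤ Metric.diam (bcomp f tt.1 n₀ '' Set.univ) :=
          Metric.dist_le_diam_of_mem (hbd n₀) (bcomp_mem f tt.1 hm x₀)
            (bcomp_mem f tt.1 hm' x₀)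
      _ < ε := hn₀ tt n₀ le_rfl
  obtain ⟨L, hL⟩ := cauchySeq_tendsto_of_complete hc
  refine ⟨L, fun x => ?_⟩
  have hdist : Tendsto (fun n => dist (bcomp f tt.1 n x₀) (bcomp f tt.1 n x)) atTop (𝓝 0) := by
    rw [Metric.tendsto_atTop]
    intro ε hε
    obtain ⟨n₀, hn₀⟩ := hwh ε hε
    refine ⟨n₀, fun n hn => ?_⟩
    have h1 : dist (bcomp f tt.1 n x₀) (bcomp f tt.1 n x)
        ≤ Metric.diam (bcomp f tt.1 n '' Set.univ) :=
      Metric.dist_le_diam_of_mem (hbd n) ⟨x₀, Set.mem_univ _, rfl⟩ ⟨x, Set.mem_univ _, rfl⟩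
    rw [Real.dist_eq, sub_zero, abs_of_nonneg dist_nonneg]
    exact lt_of_le_of_lt h1 (hn₀ tt n hn)
  exact hL.congr_dist hdist
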